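/- arXiv:0806.3562 — 6 statements merged into one kernel-verified Lean document; each statement's English description precedes it below -/
import Mathlib

section
/- Let R be a closed relation between Polish spaces S1 and S2, and let f : S1 → [0,∞) be upper semicontinuous with compact support. Then the right conjugate f→(y) = sup{f(x) : x ∈ S1, (x,y) ∈ R} (with sup ∅ = 0) is upper semicontinuous on S2. -/
/-!
Put `F (x, y) = f x` on `R` and `0` off it, so that `f→ y = ⨆ x, F (x, y)`. Since `R` is closed
and `f ≥ 0` is upper semicontinuous, so is `F`, and it vanishes for `x` outside the compact set
`tsupport f`. If `f→ y₀ < c' < c`, the tube lemma gives a neighbourhood `V` of `y₀` with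
`F (x, y) < c'` for all `x ∈ tsupport f` and `y ∈ V`; off `tsupport f` we have `F = 0 ≤ c'`,
so `f→ ≤ c' < c` on `V`.
-/

open Set Filter Topology

theorem Real.iSup_mem_eq_indicator {α : Type*} (s : Set α) (g : α → ℝ) (a : α) :
    ⨆ (_ : a ∈ s), g a = s.indicator g a := by
  by_cases ha : a ∈ s
  · rw [ciSup_pos ha, indicator_of_mem ha]
  · have : IsEmpty (a ∈ s) := ⟨ha⟩
    rw [Real.iSup_of_isEmpty, indicator_of_notMem ha]

theorem IsClosed.upperSemicontinuous_indicator_of_nonneg {α β : Type*} [TopologicalSpace α]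
    [Zero β] [LinearOrder β] {s : Set α} {g : α → β} (hs : IsClosed s)
    (hg : UpperSemicontinuous g) (hg0 : 0 ≤ g) : UpperSemicontinuous (s.indicator g) := by
  intro a c hc
  by_cases ha : a ∈ s
  · rw [indicator_of_mem ha] at hc
    filter_upwards [hg a c hc] with b hb
    by_cases hbs : b ∈ s
    · rwa [indicator_of_mem hbs]
    · rw [indicator_of_notMem hbs]
      exact (hg0 a).trans_lt hc
  · rw [indicator_of_notMem ha] at hc
    filter_upwards [hs.isOpen_compl.mem_nhds ha] with b hb
    rwa [indicator_of_notMem hb]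

theorem upperSemicontinuous_iSup_of_isCompact {X Y : Type*} [TopologicalSpace X]
    [TopologicalSpace Y] {F : X × Y → ℝ} {K : Set X} (hF : UpperSemicontinuous F)
    (hF0 : 0 ≤ F) (hK : IsCompact K) (hFK : ∀ x ∉ K, ∀ y, F (x, y) = 0) :
    UpperSemicontinuous fun y => ⨆ x, F (x, y) := by
  intro y₀ c hc
  have hbdd : BddAbove (range fun x => F (x, y₀)) := by
    have hK_bdd : BddAbove ((fun x => F (x, y₀)) '' K) :=
      ((hF.comp (.prodMk_left y₀)).upperSemicontinuousOn K).bddAbove_of_isCompact hK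
    refine (hK_bdd.insert 0).mono ?_
    rintro _ ⟨x, rfl⟩
    by_cases hx : x ∈ K
    · exact mem_insert_of_mem _ (mem_image_of_mem _ hx)
    · simp [hFK x hx y₀]
  obtain ⟨c', hy₀c', hc'c⟩ := exists_between hc
  have hc'0 : 0 ≤ c' := (Real.iSup_nonneg fun x => hF0 (x, y₀)).trans hy₀c'.le
  have htube : ∀ᶠ y in 𝓝 y₀, ∀ x ∈ K, F (x, y) < c' :=
    hK.eventually_forall_of_forall_eventually fun x _ =>
      (continuous_swap.tendsto (y₀, x)).eventually
        (hF (x, y₀) c' ((le_ciSup hbdd x).trans_lt hy₀c'))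
  filter_upwards [htube] with y hy
  refine lt_of_le_of_lt (Real.iSup_le (fun x => ?_) hc'0) hc'c
  by_cases hx : x ∈ K
  · exact (hy x hx).le
  · rw [hFK x hx y]
    exact hc'0

theorem rightConjugate_upperSemicontinuous_general
    {S1 S2 : Type*} [TopologicalSpace S1]
    [TopologicalSpace S2]
    (R : Set (S1 × S2)) (hR : IsClosed R)
    (f : S1 → ℝ) (hf : UpperSemicontinuous f) (hf0 : ∀ x, 0 ≤ f x)
    (hfc : HasCompactSupport f) :
    UpperSemicontinuous (fun y : S2 => ⨆ x, ⨆ (_ : (x, y) ∈ R), f x) := by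
  have hconj : (fun y : S2 => ⨆ x, ⨆ (_ : (x, y) ∈ R), f x) =
      fun y => ⨆ x, R.indicator (f ∘ Prod.fst) (x, y) :=
    funext fun y => iSup_congr fun x => Real.iSup_mem_eq_indicator R (f ∘ Prod.fst) (x, y)
  rw [hconj]
  have hF0 : 0 ≤ R.indicator (f ∘ Prod.fst) := indicator_nonneg fun p _ => hf0 p.1
  refine upperSemicontinuous_iSup_of_isCompact
    (hR.upperSemicontinuous_indicator_of_nonneg (hf.comp continuous_fst) fun p => hf0 p.1)
    hF0 hfc fun x hx y => ?_
  exact indicator_apply_eq_zero.2 fun _ => (image_eq_zero_of_notMem_tsupport hx : f x = 0)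

/-- If `R` is a closed relation between Polish spaces and `f : S1 → [0,∞)` is upper
semicontinuous with compact support, then the right conjugate
`f→(y) = sup {f x : (x, y) ∈ R}` (with `sup ∅ = 0`) is upper semicontinuous on `S2`. -/
theorem rightConjugate_upperSemicontinuous
    {S1 S2 : Type*} [TopologicalSpace S1] [PolishSpace S1]
    [TopologicalSpace S2] [PolishSpace S2]
    (R : Set (S1 × S2)) (hR : IsClosed R)
    (f : S1 → ℝ) (hf : UpperSemicontinuous f) (hf0 : ∀ x, 0 ≤ f x)
    (hfc : HasCompactSupport f) :
    UpperSemicontinuous (fun y : S2 => ⨆ x, ⨆ (_ : (x, y) ∈ R), f x) :=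
  rightConjugate_upperSemicontinuous_general R hR f hf hf0 hfc
end

section
/- Let R be a closed relation between Polish spaces S1 and S2, f : S1 → [0,∞) upper semicontinuous with compact support, and r > 0. Then the right conjugate of the superlevel set {x : f(x) ≥ r} equals the superlevel set of the conjugate: ({x : f(x) ≥ r})→ = {y : f→(y) ≥ r}. -/
open Set

section CompactSupport

variable {α β : Type*} [TopologicalSpace α] [LinearOrder β] [Zero β] {f : α → β}

theorem UpperSemicontinuous.bddAbove_range_of_hasCompactSupport (hf : UpperSemicontinuous f)
    (hfc : HasCompactSupport f) : BddAbove (range f) := by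
  have hrange : range f ⊆ insert 0 (f '' tsupport f) := by
    rintro _ ⟨x, rfl⟩
    by_cases hx : x ∈ tsupport f
    · exact mem_insert_of_mem _ (mem_image_of_mem f hx)
    · rw [image_eq_zero_of_notMem_tsupport hx]
      exact mem_insert 0 _
  exact ((hf.upperSemicontinuousOn _).bddAbove_of_isCompact hfc).insert 0 |>.mono hrange

/-- Off the compact set `s ∩ tsupport f` the function vanishes, so either its maximum there
or the value `0` bounds `f` on `s`. -/
theorem UpperSemicontinuous.exists_forall_le_max_zero_of_isClosed (hf : UpperSemicontinuous f)
    (hfc : HasCompactSupport f) {s : Set α} (hs : IsClosed s) (hne : s.Nonempty) :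
    ∃ x₀ ∈ s, ∀ x ∈ s, f x ≤ max (f x₀) 0 := by
  have hbound : ∀ x₀, (∀ x ∈ s ∩ tsupport f, f x ≤ f x₀) → ∀ x ∈ s, f x ≤ max (f x₀) 0 := by
    intro x₀ hx₀ x hx
    by_cases hxf : x ∈ tsupport f
    · exact le_max_of_le_left (hx₀ x ⟨hx, hxf⟩)
    · exact (image_eq_zero_of_notMem_tsupport hxf).trans_le (le_max_right _ _)
  rcases (s ∩ tsupport f).eq_empty_or_nonempty with hK | hK
  · obtain ⟨x₀, hx₀⟩ := hne
    exact ⟨x₀, hx₀, hbound x₀ fun x hx => absurd hK (Nonempty.ne_empty ⟨x, hx⟩)⟩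
  · obtain ⟨x₀, hx₀, hmax⟩ :=
      (hf.upperSemicontinuousOn _).exists_isMaxOn hK (hfc.inter_left hs)
    exact ⟨x₀, hx₀.1, hbound x₀ hmax⟩

end CompactSupport

/-- The hypothesis `0 < r` keeps the junk value `0` of an empty or unbounded real supremum
below `r`. -/
theorem UpperSemicontinuous.le_biSup_iff_of_hasCompactSupport {α : Type*} [TopologicalSpace α]
    {f : α → ℝ} (hf : UpperSemicontinuous f) (hfc : HasCompactSupport f) {s : Set α}
    (hs : IsClosed s) {r : ℝ} (hr : 0 < r) :
    r ≤ ⨆ x ∈ s, f x ↔ ∃ x ∈ s, r ≤ f x := by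
  constructor
  · intro hle
    rcases s.eq_empty_or_nonempty with rfl | hne
    · simp only [mem_empty_iff_false, Real.iSup_of_isEmpty, Real.iSup_const_zero] at hle
      linarith
    obtain ⟨x₀, hx₀, hmax⟩ := hf.exists_forall_le_max_zero_of_isClosed hfc hs hne
    have hsup : ⨆ x ∈ s, f x ≤ max (f x₀) 0 :=
      Real.iSup_le (fun x => Real.iSup_le (hmax x) (le_max_right _ _)) (le_max_right _ _)
    refine ⟨x₀, hx₀, ?_⟩
    rcases le_max_iff.1 (hle.trans hsup) with h | h
    · exact h
    · linarith
  · rintro ⟨x, hx, hrx⟩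
    have hbdd : BddAbove (⋃ x, range fun _ : x ∈ s => f x) :=
      (hf.bddAbove_range_of_hasCompactSupport hfc).mono <|
        iUnion_subset fun x => range_subset_iff.2 fun _ => mem_range_self x
    exact hrx.trans (le_ciSup₂ (f := fun x _ => f x) hbdd x hx)

theorem rightConjugate_superlevel_eq_general
    {S1 S2 : Type*} [TopologicalSpace S1]
    [TopologicalSpace S2]
    (R : Set (S1 × S2)) (hR : IsClosed R)
    (f : S1 → ℝ) (hf : UpperSemicontinuous f)
    (hfc : HasCompactSupport f) (r : ℝ) (hr : 0 < r) :
    {y : S2 | ∃ x ∈ {x : S1 | r ≤ f x}, (x, y) ∈ R}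
      = {y : S2 | r ≤ ⨆ x, ⨆ (_ : (x, y) ∈ R), f x} := by
  ext y
  have hfiber : IsClosed {x : S1 | (x, y) ∈ R} := hR.preimage (Continuous.prodMk_left y)
  refine ((hf.le_biSup_iff_of_hasCompactSupport hfc hfiber hr).trans ?_).symm
  simp only [mem_ofPred_eq, and_comm]

/-- For a closed relation `R` between Polish spaces, an upper semicontinuous compactly
supported `f : S1 → [0,∞)`, and `r > 0`, the right conjugate of the superlevel set
`{x | f x ≥ r}` equals the superlevel set of the conjugate function `f→`. -/
theorem rightConjugate_superlevel_eq
    {S1 S2 : Type*} [TopologicalSpace S1] [PolishSpace S1]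
    [TopologicalSpace S2] [PolishSpace S2]
    (R : Set (S1 × S2)) (hR : IsClosed R)
    (f : S1 → ℝ) (hf : UpperSemicontinuous f) (hf0 : ∀ x, 0 ≤ f x)
    (hfc : HasCompactSupport f) (r : ℝ) (hr : 0 < r) :
    {y : S2 | ∃ x ∈ {x : S1 | r ≤ f x}, (x, y) ∈ R}
      = {y : S2 | r ≤ ⨆ x, ⨆ (_ : (x, y) ∈ R), f x} :=
  rightConjugate_superlevel_eq_general R hR f hf hfc r hr
end

section
/- Define a relation on ℝ by x ≈ y iff |x − y| ≤ ε, for a fixed ε ≥ 0. Two real random variables X1 and X2 with cumulative distribution functions F1 and F2 admit a coupling (X̂1, X̂2) with |X̂1 − X̂2| ≤ ε almost surely if and only if F2(x − ε) ≤ F1(x) ≤ F2(x + ε) for all x ∈ ℝ. -/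
/-!
Quantile coupling. For `U` uniform on `(0, 1)`, the pair `(F₁⁻¹(U), F₂⁻¹(U))` of generalized
inverses has marginals `μ1` and `μ2`, because `F⁻¹(u) ≤ x ↔ u ≤ F(x)`. The same Galois
connection turns `F₁(x) ≤ F₂(x + ε)` into `F₂⁻¹(u) ≤ F₁⁻¹(u) + ε`, and symmetrically, so the
pair is within `ε` everywhere. Conversely, if `|X̂₁ - X̂₂| ≤ ε` almost surely then `X̂₁ ≤ x`
forces `X̂₂ ≤ x + ε`, and symmetrically.
-/

open Set MeasureTheory

open ProbabilityTheory Filter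

/-- The generalized inverse of the CDF. Outside `(0, 1)` the infimum is of an empty or
unbounded set, so only the values on `(0, 1)` are meaningful. -/
noncomputable def quantile (μ : Measure ℝ) (u : ℝ) : ℝ := sInf {x | u ≤ cdf μ x}

section Quantile

variable (μ : Measure ℝ) {u : ℝ}

lemma nonempty_setOf_le_cdf (hu : u < 1) : {x | u ≤ cdf μ x}.Nonempty :=
  ((tendsto_cdf_atTop μ).eventually (eventually_ge_nhds hu)).exists

lemma bddBelow_setOf_le_cdf (hu : 0 < u) : BddBelow {x | u ≤ cdf μ x} := by
  obtain ⟨b, hb⟩ := eventually_atBot.mp ((tendsto_cdf_atBot μ).eventually (eventually_lt_nhds hu))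
  exact ⟨b, fun x hx => le_of_not_ge fun hxb => (hb x hxb).not_ge hx⟩

lemma le_cdf_quantile (hu₁ : u < 1) : u ≤ cdf μ (quantile μ u) := by
  have h_above : ∀ x > quantile μ u, u ≤ cdf μ x := fun x hx => by
    obtain ⟨y, hy, hyx⟩ := exists_lt_of_csInf_lt (nonempty_setOf_le_cdf μ hu₁) hx
    exact hy.trans (monotone_cdf μ hyx.le)
  exact ge_of_tendsto ((cdf μ).right_continuous _ |>.mono_left (nhdsWithin_mono _ Ioi_subset_Ici_self))
    (eventually_nhdsWithin_of_forall h_above)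

lemma quantile_le_iff (hu₀ : 0 < u) (hu₁ : u < 1) {x : ℝ} :
    quantile μ u ≤ x ↔ u ≤ cdf μ x :=
  ⟨fun h => (le_cdf_quantile μ hu₁).trans (monotone_cdf μ h),
    fun h => csInf_le (bddBelow_setOf_le_cdf μ hu₀) h⟩

lemma monotoneOn_quantile : MonotoneOn (quantile μ) (Ioo 0 1) := fun _ hu _ hv huv =>
  csInf_le_csInf (bddBelow_setOf_le_cdf μ hu.1) (nonempty_setOf_le_cdf μ hv.2)
    fun _ hx => huv.trans hx

lemma aemeasurable_quantile : AEMeasurable (quantile μ) (volume.restrict (Ioo 0 1)) :=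
  aemeasurable_restrict_of_monotoneOn measurableSet_Ioo (monotoneOn_quantile μ)

end Quantile

lemma volume_Iic_inter_Ioo_zero_one {c : ℝ} (hc : c ≤ 1) :
    volume (Iic c ∩ Ioo 0 1) = ENNReal.ofReal c := by
  rw [measure_congr ((ae_eq_refl (Iic c)).inter Ioo_ae_eq_Ioc), Iic_inter_Ioc_of_le hc,
    Real.volume_Ioc, sub_zero]

theorem map_quantile (μ : Measure ℝ) [IsProbabilityMeasure μ] :
    (volume.restrict (Ioo 0 1)).map (quantile μ) = μ := by
  have : IsProbabilityMeasure (volume.restrict (Ioo (0 : ℝ) 1)) := ⟨by simp⟩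
  have := Measure.isProbabilityMeasure_map (aemeasurable_quantile μ)
  refine Measure.ext_of_Iic _ _ fun x => ?_
  have hpre : quantile μ ⁻¹' Iic x ∩ Ioo 0 1 = Iic (cdf μ x) ∩ Ioo 0 1 := by
    ext u
    simp only [mem_inter_iff, mem_preimage, mem_Iic]
    exact and_congr_left fun hu => quantile_le_iff μ hu.1 hu.2
  rw [Measure.map_apply_of_aemeasurable (aemeasurable_quantile μ) measurableSet_Iic,
    Measure.restrict_apply' measurableSet_Ioo, hpre,
    volume_Iic_inter_Ioo_zero_one (cdf_le_one μ x), ofReal_cdf]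

lemma quantile_le_quantile_add {μ ν : Measure ℝ} [IsProbabilityMeasure μ] [IsProbabilityMeasure ν]
    {c : ℝ} (h : ∀ x, μ (Iic x) ≤ ν (Iic (x + c))) {u : ℝ} (hu₀ : 0 < u) (hu₁ : u < 1) :
    quantile ν u ≤ quantile μ u + c := by
  rw [quantile_le_iff ν hu₀ hu₁]
  refine (le_cdf_quantile μ hu₁).trans ?_
  rw [cdf_eq_real, cdf_eq_real, measureReal_def, measureReal_def]
  exact ENNReal.toReal_mono (measure_ne_top _ _) (h _)

noncomputable def quantileCoupling (μ ν : Measure ℝ) : Measure (ℝ × ℝ) :=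
  (volume.restrict (Ioo 0 1)).map fun u => (quantile μ u, quantile ν u)

section QuantileCoupling

variable (μ ν : Measure ℝ)

lemma aemeasurable_quantile_prodMk :
    AEMeasurable (fun u => (quantile μ u, quantile ν u)) (volume.restrict (Ioo 0 1)) :=
  (aemeasurable_quantile μ).prodMk (aemeasurable_quantile ν)

lemma quantileCoupling_eq_one {s : Set (ℝ × ℝ)} (hs : MeasurableSet s)
    (h : ∀ u ∈ Ioo (0 : ℝ) 1, (quantile μ u, quantile ν u) ∈ s) :
    quantileCoupling μ ν s = 1 := by
  have hsub : Ioo 0 1 ⊆ (fun u => (quantile μ u, quantile ν u)) ⁻¹' s := h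
  rw [quantileCoupling, Measure.map_apply_of_aemeasurable (aemeasurable_quantile_prodMk μ ν) hs,
    Measure.restrict_apply' measurableSet_Ioo, inter_eq_right.2 hsub, Real.volume_Ioo]
  norm_num

instance : IsProbabilityMeasure (quantileCoupling μ ν) :=
  ⟨quantileCoupling_eq_one μ ν .univ fun _ _ => trivial⟩

lemma fst_quantileCoupling [IsProbabilityMeasure μ] : (quantileCoupling μ ν).fst = μ := by
  rw [quantileCoupling, Measure.fst_map_prodMk₀ (aemeasurable_quantile ν), map_quantile]

lemma snd_quantileCoupling [IsProbabilityMeasure ν] : (quantileCoupling μ ν).snd = ν := by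
  rw [quantileCoupling, Measure.snd_map_prodMk₀ (aemeasurable_quantile μ), map_quantile]

end QuantileCoupling

section Marginals

variable {ρ : Measure (ℝ × ℝ)} {c : ℝ}

lemma fst_Iic_le_snd_Iic_add (h : ∀ᵐ p ∂ρ, p.2 ≤ p.1 + c) (x : ℝ) :
    ρ.fst (Iic x) ≤ ρ.snd (Iic (x + c)) := by
  rw [Measure.fst_apply measurableSet_Iic, Measure.snd_apply measurableSet_Iic]
  refine measure_mono_ae (h.mono fun p hp (hpx : p.1 ≤ x) => ?_)
  show p.2 ≤ x + c
  linarith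

lemma snd_Iic_le_fst_Iic_add (h : ∀ᵐ p ∂ρ, p.1 ≤ p.2 + c) (x : ℝ) :
    ρ.snd (Iic x) ≤ ρ.fst (Iic (x + c)) := by
  simpa using fst_Iic_le_snd_Iic_add (ρ := ρ.map Prod.swap)
    (MeasurableEquiv.prodComm.measurableEmbedding.ae_map_iff.2 h) x

end Marginals

theorem coupling_abs_le_iff_cdf_general
    (μ1 μ2 : Measure ℝ) [IsProbabilityMeasure μ1] [IsProbabilityMeasure μ2]
    (ε : ℝ) :
    (∃ lam : Measure (ℝ × ℝ), IsProbabilityMeasure lam ∧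
        lam.fst = μ1 ∧ lam.snd = μ2 ∧ lam {p : ℝ × ℝ | |p.1 - p.2| ≤ ε} = 1)
      ↔ ∀ x : ℝ,
          μ2 (Set.Iic (x - ε)) ≤ μ1 (Set.Iic x) ∧ μ1 (Set.Iic x) ≤ μ2 (Set.Iic (x + ε)) := by
  have hS : MeasurableSet {p : ℝ × ℝ | |p.1 - p.2| ≤ ε} :=
    measurableSet_le (measurable_fst.sub measurable_snd).abs measurable_const
  constructor
  · rintro ⟨ρ, _, rfl, rfl, hρ⟩ x
    have hclose : ∀ᵐ p ∂ρ, |p.1 - p.2| ≤ ε := (mem_ae_iff_prob_eq_one hS).2 hρ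
    have h₁ : ∀ᵐ p ∂ρ, p.1 ≤ p.2 + ε := hclose.mono fun p hp => by linarith [(abs_le.1 hp).2]
    have h₂ : ∀ᵐ p ∂ρ, p.2 ≤ p.1 + ε := hclose.mono fun p hp => by linarith [(abs_le.1 hp).1]
    exact ⟨by simpa using snd_Iic_le_fst_Iic_add h₁ (x - ε), fst_Iic_le_snd_Iic_add h₂ x⟩
  · intro h
    have hclose (u : ℝ) (hu : u ∈ Ioo (0 : ℝ) 1) : |quantile μ1 u - quantile μ2 u| ≤ ε := by
      have h₁ := quantile_le_quantile_add (fun x => (h x).2) hu.1 hu.2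
      have h₂ := quantile_le_quantile_add (fun x => by simpa using (h (x + ε)).1) hu.1 hu.2
      exact abs_le.2 ⟨by linarith, by linarith⟩
    exact ⟨quantileCoupling μ1 μ2, inferInstance, fst_quantileCoupling μ1 μ2,
      snd_quantileCoupling μ1 μ2, quantileCoupling_eq_one μ1 μ2 hS hclose⟩

/-- For the relation `x ≈ y ↔ |x - y| ≤ ε` on `ℝ` (with `ε ≥ 0`), two real random
variables (identified with their distributions `μ1`, `μ2`) admit a coupling `(X̂1, X̂2)`
with `|X̂1 - X̂2| ≤ ε` almost surely if and only if their cumulative distribution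
functions satisfy `F2(x - ε) ≤ F1(x) ≤ F2(x + ε)` for all `x`. -/
theorem coupling_abs_le_iff_cdf
    (μ1 μ2 : Measure ℝ) [IsProbabilityMeasure μ1] [IsProbabilityMeasure μ2]
    (ε : ℝ) (hε : 0 ≤ ε) :
    (∃ lam : Measure (ℝ × ℝ), IsProbabilityMeasure lam ∧
        lam.fst = μ1 ∧ lam.snd = μ2 ∧ lam {p : ℝ × ℝ | |p.1 - p.2| ≤ ε} = 1)
      ↔ ∀ x : ℝ,
          μ2 (Set.Iic (x - ε)) ≤ μ1 (Set.Iic x) ∧ μ1 (Set.Iic x) ≤ μ2 (Set.Iic (x + ε)) :=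
  coupling_abs_le_iff_cdf_general μ1 μ2 ε
end

section
/- Let R⁽⁰⁾ ⊇ R⁽¹⁾ ⊇ ⋯ be a decreasing sequence of closed relations between Polish spaces S1 and S2, and set R* = ⋂_n R⁽ⁿ⁾. If probability measures μ1, μ2 satisfy (μ1, μ2) ∈ R⁽ⁿ⁾_st for every n (i.e., for each n there is a coupling λ_n with λ_n(R⁽ⁿ⁾) = 1), then there exists a coupling λ of μ1 and μ2 with λ(R*) = 1. -/
/-! The couplings of `μ1` and `μ2` form a tight set (their marginals are fixed), so by Prokhorov's
theorem they form a compact set of probability measures for the weak topology. By the portmanteau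
theorem, `{ρ | ρ (R n) = 1}` is weakly closed because `R n` is closed. The couplings giving full
mass to `R n` therefore form a decreasing sequence of nonempty compact sets, and any coupling in
their intersection gives full mass to `⋂ n, R n`. -/

open MeasureTheory Filter Set Topology

lemma isClosed_setOf_measure_eq_one {Ω : Type*} [MeasurableSpace Ω] [TopologicalSpace Ω]
    [OpensMeasurableSpace Ω] [HasOuterApproxClosed Ω] {F : Set Ω} (hF : IsClosed F) :
    IsClosed {ρ : ProbabilityMeasure Ω | (ρ : Measure Ω) F = 1} := by
  set s := {ρ : ProbabilityMeasure Ω | (ρ : Measure Ω) F = 1}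
  refine isClosed_of_closure_subset fun ρ hρ ↦ le_antisymm prob_le_one ?_
  have := mem_closure_iff_nhdsWithin_neBot.1 hρ
  have hlim : limsup (fun σ : ProbabilityMeasure Ω ↦ (σ : Measure Ω) F) (𝓝[s] ρ) = 1 :=
    (limsup_congr (eventually_mem_nhdsWithin (s := s))).trans (limsup_const 1)
  rw [← hlim]
  exact ProbabilityMeasure.limsup_measure_closed_le_of_tendsto
    (tendsto_id.mono_left nhdsWithin_le_nhds) hF

section Couplings

variable {X Y : Type*} [MeasurableSpace X] [TopologicalSpace X] [BorelSpace X]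
  [MeasurableSpace Y] [TopologicalSpace Y] [BorelSpace Y]

lemma isTightMeasureSet_setOf_fst_eq_snd_eq
    [TopologicalSpace.IsCompletelyPseudoMetrizableSpace X] [SecondCountableTopology X]
    [TopologicalSpace.IsCompletelyPseudoMetrizableSpace Y] [SecondCountableTopology Y]
    (μ : Measure X) (ν : Measure Y) [IsFiniteMeasure μ] [IsFiniteMeasure ν] :
    IsTightMeasureSet {ρ : Measure (X × Y) | ρ.fst = μ ∧ ρ.snd = ν} :=
  .prodMk (isTightMeasureSet_singleton.subset (by rintro _ ⟨ρ, hρ, rfl⟩; exact hρ.1))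
    (isTightMeasureSet_singleton.subset (by rintro _ ⟨ρ, hρ, rfl⟩; exact hρ.2))

lemma isClosed_setOf_fst_eq_snd_eq [HasOuterApproxClosed X] [HasOuterApproxClosed Y]
    [OpensMeasurableSpace (X × Y)] (μ : ProbabilityMeasure X) (ν : ProbabilityMeasure Y) :
    IsClosed {ρ : ProbabilityMeasure (X × Y) |
      (ρ : Measure (X × Y)).fst = μ ∧ (ρ : Measure (X × Y)).snd = ν} := by
  convert (isClosed_eq (ProbabilityMeasure.continuous_map continuous_fst)
    (continuous_const (y := μ))).inter
    (isClosed_eq (ProbabilityMeasure.continuous_map continuous_snd)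
    (continuous_const (y := ν))) using 1
  ext ρ
  simp [← ProbabilityMeasure.toMeasure_injective.eq_iff, Measure.fst, Measure.snd]

lemma isCompact_setOf_fst_eq_snd_eq [PolishSpace X] [PolishSpace Y]
    (μ : ProbabilityMeasure X) (ν : ProbabilityMeasure Y) :
    IsCompact {ρ : ProbabilityMeasure (X × Y) |
      (ρ : Measure (X × Y)).fst = μ ∧ (ρ : Measure (X × Y)).snd = ν} := by
  rw [← (isClosed_setOf_fst_eq_snd_eq μ ν).closure_eq]
  refine isCompact_closure_of_isTightMeasureSet
    ((isTightMeasureSet_setOf_fst_eq_snd_eq (μ : Measure X) ν).subset ?_)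
  rintro _ ⟨ρ, hρ, rfl⟩
  exact hρ

end Couplings

/-- Let `R 0 ⊇ R 1 ⊇ ⋯` be a decreasing sequence of closed relations between Polish
spaces and `R* = ⋂ n, R n`. If `μ1` and `μ2` admit, for each `n`, a coupling `λ_n` with
`λ_n (R n) = 1`, then they admit a coupling `λ` with `λ(R*) = 1`. -/
theorem coupling_of_decreasing_relations
    {S1 S2 : Type*}
    [MeasurableSpace S1] [TopologicalSpace S1] [PolishSpace S1] [BorelSpace S1]
    [MeasurableSpace S2] [TopologicalSpace S2] [PolishSpace S2] [BorelSpace S2]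
    (R : ℕ → Set (S1 × S2)) (hRclosed : ∀ n, IsClosed (R n))
    (hRmono : ∀ n, R (n + 1) ⊆ R n)
    (μ1 : Measure S1) (μ2 : Measure S2)
    [IsProbabilityMeasure μ1] [IsProbabilityMeasure μ2]
    (h : ∀ n, ∃ lam : Measure (S1 × S2), IsProbabilityMeasure lam ∧
        lam.fst = μ1 ∧ lam.snd = μ2 ∧ lam (R n) = 1) :
    ∃ lam : Measure (S1 × S2), IsProbabilityMeasure lam ∧
      lam.fst = μ1 ∧ lam.snd = μ2 ∧ lam (⋂ n, R n) = 1 := by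
  let C : Set (ProbabilityMeasure (S1 × S2)) :=
    {ρ | (ρ : Measure (S1 × S2)).fst = μ1 ∧ (ρ : Measure (S1 × S2)).snd = μ2}
  let K : ℕ → Set (ProbabilityMeasure (S1 × S2)) := fun n ↦ C ∩ {ρ | (ρ : Measure _) (R n) = 1}
  have hC : IsCompact C := isCompact_setOf_fst_eq_snd_eq ⟨μ1, ‹_›⟩ ⟨μ2, ‹_›⟩
  have hK_anti (n : ℕ) : K (n + 1) ⊆ K n := fun ρ hρ ↦
    ⟨hρ.1, le_antisymm prob_le_one (hρ.2 ▸ measure_mono (hRmono n))⟩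
  have hK_nonempty (n : ℕ) : (K n).Nonempty := by
    obtain ⟨lam, hlam, hfst, hsnd, hR⟩ := h n
    exact ⟨⟨lam, hlam⟩, ⟨hfst, hsnd⟩, hR⟩
  obtain ⟨ρ, hρ⟩ := IsCompact.nonempty_iInter_of_sequence_nonempty_isCompact_isClosed K hK_anti
    hK_nonempty (hC.inter_right (isClosed_setOf_measure_eq_one (hRclosed 0)))
    fun n ↦ hC.isClosed.inter (isClosed_setOf_measure_eq_one (hRclosed n))
  rw [mem_iInter] at hρ
  refine ⟨ρ, inferInstance, (hρ 0).1.1, (hρ 0).1.2, ?_⟩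
  rw [(antitone_nat_of_succ_le hRmono).measure_iInter (fun n ↦ (hRclosed n).nullMeasurableSet)
    ⟨0, measure_ne_top _ _⟩]
  exact (iInf_congr fun n ↦ (hρ n).2).trans iInf_const
end

section
/- Let X1, X2 be Markov processes on Polish spaces with unique stationary distributions μ1, μ2 such that X_i(x_i, t) converges weakly to μ_i as t → ∞ for every initial state x_i. If there exists a nonempty closed relation R' ⊆ R such that x1 R' x2 implies X1(x1,t) ~_{R'_st} X2(x2,t) for all t, then (μ1, μ2) ∈ R_st. -/
/-!
Start both processes from a point `p ∈ R'`. At integer times their laws converge to `μ1`, `μ2`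
and are coupled on `R'`. Convergent sequences of laws on Polish spaces are tight, hence so are
these couplings, and by Prokhorov's theorem they accumulate at some `π`. Marginals are continuous
in the weak topology, so `π` couples `μ1` and `μ2`, and by the portmanteau theorem `π` gives full
mass to the closed set `R'`, hence to `R`.
-/

open MeasureTheory Filter Topology Set

section StochRelated

variable {X Y : Type*} [MeasurableSpace X] [MeasurableSpace Y]

/-- The paper's `μ ~_{R_st} ν`: `μ` and `ν` admit a coupling supported on `R`. -/
def StochRelated (R : Set (X × Y)) (μ : Measure X) (ν : Measure Y) : Prop :=
  ∃ lam : Measure (X × Y), IsProbabilityMeasure lam ∧ lam.fst = μ ∧ lam.snd = ν ∧ lam R = 1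

theorem StochRelated.mono {R R' : Set (X × Y)} {μ : Measure X} {ν : Measure Y}
    (h : StochRelated R' μ ν) (hR : R' ⊆ R) : StochRelated R μ ν := by
  obtain ⟨lam, hprob, hfst, hsnd, hR'⟩ := h
  exact ⟨lam, hprob, hfst, hsnd, le_antisymm prob_le_one (hR' ▸ measure_mono hR)⟩

end StochRelated

theorem isTightMeasureSet_range_of_tendsto {X : Type*} [TopologicalSpace X] [PolishSpace X]
    [MeasurableSpace X] [BorelSpace X] {μs : ℕ → ProbabilityMeasure X} {μ : ProbabilityMeasure X}
    (h : Tendsto μs atTop (𝓝 μ)) :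
    IsTightMeasureSet ((↑) '' range μs : Set (Measure X)) := by
  let := TopologicalSpace.upgradeIsCompletelyMetrizable X
  have hcomp : IsCompact (closure (range μs)) :=
    h.isCompact_insert_range.of_isClosed_subset isClosed_closure
      (closure_minimal (subset_insert _ _) h.isCompact_insert_range.isClosed)
  exact isTightMeasureSet_of_isCompact_closure hcomp

section Polish

variable {X Y : Type*} [TopologicalSpace X] [PolishSpace X] [MeasurableSpace X] [BorelSpace X]
  [TopologicalSpace Y] [PolishSpace Y] [MeasurableSpace Y] [BorelSpace Y]

theorem StochRelated.of_tendsto {μs : ℕ → ProbabilityMeasure X} {νs : ℕ → ProbabilityMeasure Y}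
    {μ : ProbabilityMeasure X} {ν : ProbabilityMeasure Y}
    (hμ : Tendsto μs atTop (𝓝 μ)) (hν : Tendsto νs atTop (𝓝 ν))
    {F : Set (X × Y)} (hF : IsClosed F) (h : ∀ n, StochRelated F (μs n : Measure X) (νs n)) :
    StochRelated F (μ : Measure X) ν := by
  choose lam hprob hfst hsnd hlamF using h
  set P : ℕ → ProbabilityMeasure (X × Y) := fun n ↦ ⟨lam n, hprob n⟩
  have hP_fst : ∀ n, (P n).map measurable_fst.aemeasurable = μs n := fun n ↦
    Subtype.ext (hfst n)
  have hP_snd : ∀ n, (P n).map measurable_snd.aemeasurable = νs n := fun n ↦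
    Subtype.ext (hsnd n)
  have htight : IsTightMeasureSet ((↑) '' range P : Set (Measure (X × Y))) := by
    refine .prodMk ((isTightMeasureSet_range_of_tendsto hμ).subset ?_)
      ((isTightMeasureSet_range_of_tendsto hν).subset ?_)
    · rintro _ ⟨_, ⟨_, ⟨n, rfl⟩, rfl⟩, rfl⟩
      exact ⟨μs n, ⟨n, rfl⟩, (hfst n).symm⟩
    · rintro _ ⟨_, ⟨_, ⟨n, rfl⟩, rfl⟩, rfl⟩
      exact ⟨νs n, ⟨n, rfl⟩, (hsnd n).symm⟩
  -- Prokhorov: along an ultrafilter finer than `atTop`, the couplings converge.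
  set U := Ultrafilter.of (atTop : Filter ℕ)
  have hU : (U : Filter ℕ) ≤ atTop := Ultrafilter.of_le _
  obtain ⟨π, -, hπ⟩ := (isCompact_closure_of_isTightMeasureSet htight).ultrafilter_le_nhds
    (U.map P) (le_principal_iff.2 (mem_of_superset range_mem_map subset_closure))
  have hPπ : Tendsto P U (𝓝 π) := hπ
  refine ⟨π, inferInstance, ?_, ?_, ?_⟩
  · have := tendsto_nhds_unique
      (ProbabilityMeasure.tendsto_map_of_tendsto_of_continuous P π hPπ continuous_fst)
      (by simpa only [hP_fst] using hμ.mono_left hU)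
    exact congrArg ProbabilityMeasure.toMeasure this
  · have := tendsto_nhds_unique
      (ProbabilityMeasure.tendsto_map_of_tendsto_of_continuous P π hPπ continuous_snd)
      (by simpa only [hP_snd] using hν.mono_left hU)
    exact congrArg ProbabilityMeasure.toMeasure this
  · refine le_antisymm prob_le_one ?_
    have := ProbabilityMeasure.limsup_measure_closed_le_of_tendsto hPπ hF
    simpa [P, hlamF] using this

end Polish

theorem stationary_distributions_stochastically_related_general
    {S1 S2 : Type*}
    [MeasurableSpace S1] [TopologicalSpace S1] [PolishSpace S1] [BorelSpace S1]
    [MeasurableSpace S2] [TopologicalSpace S2] [PolishSpace S2] [BorelSpace S2]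
    (X1 : S1 → ℝ → ProbabilityMeasure S1) (X2 : S2 → ℝ → ProbabilityMeasure S2)
    (μ1 : ProbabilityMeasure S1) (μ2 : ProbabilityMeasure S2)
    (hconv1 : ∀ x : S1, Tendsto (fun t => X1 x t) atTop (nhds μ1))
    (hconv2 : ∀ x : S2, Tendsto (fun t => X2 x t) atTop (nhds μ2))
    (R : Set (S1 × S2))
    (R' : Set (S1 × S2)) (hR'sub : R' ⊆ R) (hR'closed : IsClosed R')
    (hR'ne : R'.Nonempty)
    (hpres : ∀ p ∈ R', ∀ t : ℝ, ∃ lam : Measure (S1 × S2), IsProbabilityMeasure lam ∧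
        lam.fst = (X1 p.1 t : Measure S1) ∧ lam.snd = (X2 p.2 t : Measure S2) ∧
        lam R' = 1) :
    ∃ lam : Measure (S1 × S2), IsProbabilityMeasure lam ∧
      lam.fst = (μ1 : Measure S1) ∧ lam.snd = (μ2 : Measure S2) ∧ lam R = 1 := by
  obtain ⟨p, hp⟩ := hR'ne
  have hR'st : StochRelated R' (μ1 : Measure S1) μ2 :=
    .of_tendsto ((hconv1 p.1).comp tendsto_natCast_atTop_atTop)
      ((hconv2 p.2).comp tendsto_natCast_atTop_atTop) hR'closed fun n ↦ hpres p hp n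
  exact hR'st.mono hR'sub

/-- Comparison of stationary distributions: let `X1`, `X2` be (Markov) processes,
represented through their time-`t` distributions `X_i x t` started from `x`, whose
distributions converge weakly to stationary distributions `μ1`, `μ2` from every initial
state. If there is a nonempty closed subrelation `R' ⊆ R` such that `(x1, x2) ∈ R'`
implies that `X1 x1 t` and `X2 x2 t` admit a coupling supported on `R'` for all `t`,
then `(μ1, μ2) ∈ R_st`, i.e. `μ1` and `μ2` admit a coupling supported on `R`. -/
theorem stationary_distributions_stochastically_related
    {S1 S2 : Type*}
    [MeasurableSpace S1] [TopologicalSpace S1] [PolishSpace S1] [BorelSpace S1]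
    [MeasurableSpace S2] [TopologicalSpace S2] [PolishSpace S2] [BorelSpace S2]
    (X1 : S1 → ℝ → ProbabilityMeasure S1) (X2 : S2 → ℝ → ProbabilityMeasure S2)
    (μ1 : ProbabilityMeasure S1) (μ2 : ProbabilityMeasure S2)
    (hconv1 : ∀ x : S1, Tendsto (fun t => X1 x t) atTop (nhds μ1))
    (hconv2 : ∀ x : S2, Tendsto (fun t => X2 x t) atTop (nhds μ2))
    (R : Set (S1 × S2)) (hRmeas : MeasurableSet R)
    (R' : Set (S1 × S2)) (hR'sub : R' ⊆ R) (hR'closed : IsClosed R')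
    (hR'ne : R'.Nonempty)
    (hpres : ∀ p ∈ R', ∀ t : ℝ, ∃ lam : Measure (S1 × S2), IsProbabilityMeasure lam ∧
        lam.fst = (X1 p.1 t : Measure S1) ∧ lam.snd = (X2 p.2 t : Measure S2) ∧
        lam R' = 1) :
    ∃ lam : Measure (S1 × S2), IsProbabilityMeasure lam ∧
      lam.fst = (μ1 : Measure S1) ∧ lam.snd = (μ2 : Measure S2) ∧ lam R = 1 :=
  stationary_distributions_stochastically_related_general X1 X2 μ1 μ2 hconv1 hconv2 R R' hR'sub
    hR'closed hR'ne hpres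
end

section
/- Let R be a relation on a Polish space S with pushforwards: define the induced relation R' = {(x1,x2) ∈ S1' × S2' : (φ1(x1), φ2(x2)) ∈ R} for continuous maps φ_i : S_i' → S_i. Then probability measures μ1 on S1' and μ2 on S2' satisfy (μ1, μ2) ∈ R'_st if and only if (μ1 ∘ φ1^{-1}, μ2 ∘ φ2^{-1}) ∈ R_st. -/
/-!
Pushing a coupling of `μ1, μ2` supported on `R'` forward along `φ1 × φ2` gives a coupling of the
pushforwards supported on `R`. Conversely, disintegrate each `μi` along `φi`: a Markov kernel
`κi` from `Si` to `Si'`, concentrated on the fibre `φi⁻¹ {a}` for `μi ∘ φi⁻¹`-a.e. `a`, with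
`κi ∘ (μi ∘ φi⁻¹) = μi`. Running `κ1 ∥ κ2` on a coupling supported on `R` lifts it to a coupling
of `μ1, μ2`, and since the lifted points lie over the original ones, it is supported on `R'`.
-/

open MeasureTheory ProbabilityTheory

namespace MeasureTheory.Measure

variable {α β γ δ : Type*} [MeasurableSpace α] [MeasurableSpace β] [MeasurableSpace γ]
  [MeasurableSpace δ]

lemma fst_map_prodMap (ρ : Measure (α × γ)) {f : α → β} {g : γ → δ} (hf : Measurable f)
    (hg : Measurable g) : (ρ.map (Prod.map f g)).fst = ρ.fst.map f := by
  rw [Measure.fst, map_map measurable_fst (hf.prodMap hg), Measure.fst,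
    map_map hf measurable_fst]
  rfl

lemma snd_map_prodMap (ρ : Measure (α × γ)) {f : α → β} {g : γ → δ} (hf : Measurable f)
    (hg : Measurable g) : (ρ.map (Prod.map f g)).snd = ρ.snd.map g := by
  rw [Measure.snd, map_map measurable_snd (hf.prodMap hg), Measure.snd,
    map_map hg measurable_snd]
  rfl

lemma fst_comp_parallelComp (ρ : Measure (α × γ)) (κ : Kernel α β) [IsSFiniteKernel κ]
    (η : Kernel γ δ) [IsMarkovKernel η] : ((κ ∥ₖ η) ∘ₘ ρ).fst = κ ∘ₘ ρ.fst := by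
  ext s hs
  rw [fst_apply hs, bind_apply (measurable_fst hs) (Kernel.aemeasurable _),
    bind_apply hs (Kernel.aemeasurable _), Measure.fst,
    lintegral_map (κ.measurable_coe hs) measurable_fst]
  simp [← Set.prod_univ, Kernel.parallelComp_apply_prod]

lemma snd_comp_parallelComp (ρ : Measure (α × γ)) (κ : Kernel α β) [IsMarkovKernel κ]
    (η : Kernel γ δ) [IsSFiniteKernel η] : ((κ ∥ₖ η) ∘ₘ ρ).snd = η ∘ₘ ρ.snd := by
  ext s hs
  rw [snd_apply hs, bind_apply (measurable_snd hs) (Kernel.aemeasurable _),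
    bind_apply hs (Kernel.aemeasurable _), Measure.snd,
    lintegral_map (η.measurable_coe hs) measurable_snd]
  simp [← Set.univ_prod, Kernel.parallelComp_apply_prod]

end MeasureTheory.Measure

lemma exists_isMarkovKernel_comp_map_eq_self {S S' : Type*} [MeasurableSpace S] [MeasurableEq S]
    [MeasurableSpace S'] [StandardBorelSpace S'] [Nonempty S'] {φ : S' → S} (hφ : Measurable φ)
    (μ : Measure S') [IsFiniteMeasure μ] :
    ∃ κ : Kernel S S', IsMarkovKernel κ ∧ κ ∘ₘ μ.map φ = μ ∧
      ∀ᵐ a ∂μ.map φ, ∀ᵐ x ∂κ a, φ x = a := by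
  set ρ : Measure (S × S') := μ.map fun x ↦ (φ x, x)
  have hρ_fst : ρ.fst = μ.map φ := Measure.fst_map_prodMk measurable_id
  have hgraph : MeasurableSet {p : S × S' | φ p.2 = p.1} :=
    measurableSet_eq_fun (hφ.comp measurable_snd) measurable_fst
  have hρ_graph : ∀ᵐ p ∂ρ, φ p.2 = p.1 :=
    (ae_map_iff (hφ.prodMk measurable_id).aemeasurable hgraph).2 (by simp)
  refine ⟨ρ.condKernel, inferInstance, ?_, ?_⟩
  · rw [← hρ_fst, ← Measure.snd_compProd ρ.fst, ρ.disintegrate ρ.condKernel,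
      Measure.snd_map_prodMk hφ, Measure.map_id']
  · rw [← ρ.disintegrate ρ.condKernel, Measure.ae_compProd_iff hgraph] at hρ_graph
    rwa [← hρ_fst]

lemma ae_comp_parallelComp_mem_preimage {S1 S2 S1' S2' : Type*} [MeasurableSpace S1]
    [MeasurableSpace S2] [MeasurableSpace S1'] [MeasurableSpace S2'] {R : Set (S1 × S2)}
    (hR : MeasurableSet R) {φ1 : S1' → S1} {φ2 : S2' → S2} (hφ1 : Measurable φ1)
    (hφ2 : Measurable φ2) {ρ : Measure (S1 × S2)} {κ1 : Kernel S1 S1'} {κ2 : Kernel S2 S2'}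
    [IsSFiniteKernel κ1] [IsSFiniteKernel κ2] (hρR : ∀ᵐ p ∂ρ, p ∈ R)
    (hκ1 : ∀ᵐ a ∂ρ.fst, ∀ᵐ x ∂κ1 a, φ1 x = a) (hκ2 : ∀ᵐ b ∂ρ.snd, ∀ᵐ y ∂κ2 b, φ2 y = b) :
    ∀ᵐ q ∂(κ1 ∥ₖ κ2) ∘ₘ ρ, (φ1 q.1, φ2 q.2) ∈ R := by
  have hR' : MeasurableSet {q : S1' × S2' | (φ1 q.1, φ2 q.2) ∈ R} :=
    (hφ1.prodMap hφ2) hR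
  refine Measure.ae_comp_of_ae_ae hR' ?_
  filter_upwards [hρR, ae_of_ae_map measurable_fst.aemeasurable hκ1,
    ae_of_ae_map measurable_snd.aemeasurable hκ2] with p hp hκ1p hκ2p
  rw [Kernel.parallelComp_apply, Measure.ae_prod_iff_ae_ae hR']
  filter_upwards [hκ1p] with x hx
  filter_upwards [hκ2p] with y hy
  rwa [hx, hy]

/-- Induced relations: for a closed relation `R ⊆ S1 × S2` and continuous maps
`φ_i : S_i' → S_i`, let `R' = {(x1, x2) | (φ1 x1, φ2 x2) ∈ R}` be the induced relation.
Then probability measures `μ1` on `S1'` and `μ2` on `S2'` admit a coupling supported on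
`R'` if and only if the pushforwards `μ1 ∘ φ1⁻¹` and `μ2 ∘ φ2⁻¹` admit a coupling
supported on `R`. -/
theorem induced_relation_stochastic_iff
    {S1 S2 S1' S2' : Type*}
    [MeasurableSpace S1] [TopologicalSpace S1] [PolishSpace S1] [BorelSpace S1]
    [MeasurableSpace S2] [TopologicalSpace S2] [PolishSpace S2] [BorelSpace S2]
    [MeasurableSpace S1'] [TopologicalSpace S1'] [PolishSpace S1'] [BorelSpace S1']
    [MeasurableSpace S2'] [TopologicalSpace S2'] [PolishSpace S2'] [BorelSpace S2']
    (R : Set (S1 × S2)) (hR : IsClosed R)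
    (φ1 : S1' → S1) (φ2 : S2' → S2) (hφ1 : Continuous φ1) (hφ2 : Continuous φ2)
    (μ1 : Measure S1') (μ2 : Measure S2')
    [IsProbabilityMeasure μ1] [IsProbabilityMeasure μ2] :
    (∃ lam : Measure (S1' × S2'), IsProbabilityMeasure lam ∧
        lam.fst = μ1 ∧ lam.snd = μ2 ∧
        lam {p : S1' × S2' | (φ1 p.1, φ2 p.2) ∈ R} = 1)
      ↔ (∃ lam : Measure (S1 × S2), IsProbabilityMeasure lam ∧
          lam.fst = μ1.map φ1 ∧ lam.snd = μ2.map φ2 ∧ lam R = 1) := by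
  have hφ : Measurable (Prod.map φ1 φ2) := hφ1.measurable.prodMap hφ2.measurable
  constructor
  · rintro ⟨lam, _, rfl, rfl, hlamR⟩
    exact ⟨lam.map (Prod.map φ1 φ2), Measure.isProbabilityMeasure_map hφ.aemeasurable,
      lam.fst_map_prodMap hφ1.measurable hφ2.measurable,
      lam.snd_map_prodMap hφ1.measurable hφ2.measurable,
      by rwa [Measure.map_apply hφ hR.measurableSet]⟩
  · rintro ⟨lam, _, hlam1, hlam2, hlamR⟩
    have : Nonempty S1' := μ1.nonempty_of_neZero
    have : Nonempty S2' := μ2.nonempty_of_neZero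
    obtain ⟨κ1, _, hκ1μ, hκ1φ⟩ := exists_isMarkovKernel_comp_map_eq_self hφ1.measurable μ1
    obtain ⟨κ2, _, hκ2μ, hκ2φ⟩ := exists_isMarkovKernel_comp_map_eq_self hφ2.measurable μ2
    refine ⟨(κ1 ∥ₖ κ2) ∘ₘ lam, inferInstance,
      by rw [Measure.fst_comp_parallelComp, hlam1, hκ1μ],
      by rw [Measure.snd_comp_parallelComp, hlam2, hκ2μ], ?_⟩
    have hlamR_ae : ∀ᵐ p ∂lam, p ∈ R := (mem_ae_iff_prob_eq_one hR.measurableSet).2 hlamR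
    exact (mem_ae_iff_prob_eq_one (hφ hR.measurableSet)).1 <|
      ae_comp_parallelComp_mem_preimage hR.measurableSet hφ1.measurable hφ2.measurable
        hlamR_ae (hlam1 ▸ hκ1φ) (hlam2 ▸ hκ2φ)
end
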